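/- For all n ≥ 1, H_{2n-1} = sum_{j=0}^{n} (-1)^{n+j} LS(n,j) (j!)^2, where LS(n,j) are the Legendre-Stirling numbers of the second kind and H_{2n-1} are the Genocchi numbers of the second kind. -/
import Mathlib


/-- `F̃ 1 = 1`, `F̃_{n+1}(z) = z(z+1) F̃_n(z+1) - (z-1)z F̃_n(z)`. -/
def Ftilde : ℕ → ℚ → ℚ
  | 0, _ => 1
  | 1, _ => 1
  | n + 2, z => z * (z + 1) * Ftilde (n + 1) (z + 1) - (z - 1) * z * Ftilde (n + 1) z

/-- Genocchi numbers of the second kind: `genocchiH n = H_{2n-1} = F̃_n(1)`. -/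
def genocchiH (n : ℕ) : ℚ := Ftilde n 1

/-- Legendre-Stirling numbers of the second kind. -/
def legendreLS : ℕ → ℕ → ℚ
  | 0, 0 => 1
  | 0, _ + 1 => 0
  | _ + 1, 0 => 0
  | n + 1, j + 1 => legendreLS n j + ((j : ℚ) + 1) * ((j : ℚ) + 2) * legendreLS n (j + 1)

def gaux : ℕ → ℚ → ℚ
  | 0, _ => 1
  | k + 1, z => ((k + 1).factorial : ℚ) * ∏ i ∈ Finset.range k, (z + i + 1)

lemma ls_zero_of_lt : ∀ n j, n < j → legendreLS n j = 0
  | 0, _ + 1, _ => rfl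
  | n + 1, j + 1, h => by
      have h1 := ls_zero_of_lt n j (by omega)
      have h2 := ls_zero_of_lt n (j + 1) (by omega)
      simp [legendreLS, h1, h2]

lemma key (k : ℕ) (z : ℚ) :
    gaux (k + 2) z - ((k : ℚ) + 1) * ((k : ℚ) + 2) * gaux (k + 1) z
      = z * (z + 1) * gaux (k + 1) (z + 1) - (z - 1) * z * gaux (k + 1) z := by
  simp only [gaux]
  have h1 := Finset.prod_range_succ' (fun i : ℕ => z + i + 1) k
  have h2 := Finset.prod_range_succ (fun i : ℕ => z + i + 1) k
  have e1 : ∏ i ∈ Finset.range k, (z + 1 + (i : ℚ) + 1)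
      = ∏ i ∈ Finset.range k, (z + ((i:ℚ) + 1) + 1) :=
    Finset.prod_congr rfl (by intros; ring)
  norm_num at h1
  have hQ : (∏ i ∈ Finset.range k, (z + 1 + (i : ℚ) + 1)) * (z + 1)
      = (∏ i ∈ Finset.range k, (z + i + 1)) * (z + k + 1) := by
    rw [e1, ← h1, h2]
  rw [h2]
  have hf : ((k + 1 + 1).factorial : ℚ) = ((k:ℚ) + 2) * ((k + 1).factorial : ℚ) := by
    rw [Nat.factorial_succ]; push_cast; ring
  rw [hf]
  linear_combination (-(((k + 1).factorial : ℚ) * z)) * hQ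

lemma main_identity : ∀ n : ℕ, 1 ≤ n → ∀ z : ℚ,
    Ftilde n z = ∑ j ∈ Finset.range (n + 1),
      (-1) ^ (n + j) * legendreLS n j * gaux j z := by
  intro n hn
  induction n, hn using Nat.le_induction with
  | base =>
      intro z
      simp [Ftilde, legendreLS, gaux, Finset.sum_range_succ]
  | succ n hn ih =>
      intro z
      obtain ⟨m, rfl⟩ : ∃ m, n = m + 1 := ⟨n - 1, by omega⟩
      have hrec : Ftilde (m + 1 + 1) z
          = z * (z + 1) * Ftilde (m + 1) (z + 1) - (z - 1) * z * Ftilde (m + 1) z := rfl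
      rw [hrec, ih (z + 1), ih z]
      have hA : z * (z + 1) * (∑ j ∈ Finset.range (m + 1 + 1),
              (-1:ℚ) ^ (m + 1 + j) * legendreLS (m + 1) j * gaux j (z + 1))
            - (z - 1) * z * (∑ j ∈ Finset.range (m + 1 + 1),
              (-1:ℚ) ^ (m + 1 + j) * legendreLS (m + 1) j * gaux j z)
          = ∑ j ∈ Finset.range (m + 2),
              ((-1:ℚ) ^ (m + 1 + j) * legendreLS (m + 1) j * gaux (j + 1) z
                - (-1:ℚ) ^ (m + 1 + j) * ((j:ℚ) * ((j:ℚ) + 1)) * legendreLS (m + 1) j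
                  * gaux j z) := by
        rw [Finset.mul_sum, Finset.mul_sum, ← Finset.sum_sub_distrib]
        apply Finset.sum_congr rfl
        intro j _
        match j with
        | 0 => simp [legendreLS]
        | k + 1 =>
          push_cast
          linear_combination
            (-((-1:ℚ) ^ (m + 1 + (k + 1)) * legendreLS (m + 1) (k + 1))) * key k z
      rw [hA]
      set D : ℕ → ℚ := fun k =>
        (-1:ℚ) ^ (m + k) * (k:ℚ) * ((k:ℚ) + 1) * legendreLS (m + 1) k * gaux k z with hDdef
      have hD : ∑ j ∈ Finset.range (m + 2), D (j + 1)
          = ∑ j ∈ Finset.range (m + 2), D j := by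
        have h1 := Finset.sum_range_succ' D (m + 2)
        have h2 := Finset.sum_range_succ D (m + 2)
        have hD0 : D 0 = 0 := by simp [hDdef]
        have hDtop : D (m + 2) = 0 := by
          simp [hDdef, ls_zero_of_lt (m + 1) (m + 2) (by omega)]
        rw [hD0] at h1
        rw [hDtop] at h2
        linarith [h1, h2]
      have hsplit := Finset.sum_range_succ'
        (fun j => (-1:ℚ) ^ (m + 1 + 1 + j) * legendreLS (m + 1 + 1) j * gaux j z) (m + 2)
      rw [hsplit]
      have hterm : ∀ j ∈ Finset.range (m + 2),
          (-1:ℚ) ^ (m + 1 + 1 + (j + 1)) * legendreLS (m + 1 + 1) (j + 1) * gaux (j + 1) z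
            = ((-1:ℚ) ^ (m + 1 + j) * legendreLS (m + 1) j * gaux (j + 1) z
                - (-1:ℚ) ^ (m + 1 + j) * ((j:ℚ) * ((j:ℚ) + 1)) * legendreLS (m + 1) j
                  * gaux j z)
              + (D (j + 1) - D j) := by
        intro j _
        simp only [legendreLS, hDdef]
        push_cast
        ring
      rw [Finset.sum_congr rfl hterm]
      rw [Finset.sum_add_distrib, Finset.sum_sub_distrib]
      have hz : ∑ x ∈ Finset.range (m + 2), (D (x + 1) - D x) = 0 := by
        rw [Finset.sum_sub_distrib, hD]; ring
      rw [hz]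
      simp [legendreLS]

lemma gaux_one : ∀ j : ℕ, gaux j 1 = ((j.factorial : ℚ)) ^ 2 := by
  intro j
  match j with
  | 0 => simp [gaux]
  | k + 1 =>
    have hp : ∏ i ∈ Finset.range k, ((1:ℚ) + i + 1) = ((k + 1).factorial : ℚ) := by
      induction k with
      | zero => simp
      | succ k ih =>
          rw [Finset.prod_range_succ, ih, Nat.factorial_succ (k + 1)]
          push_cast
          ring
    simp only [gaux, hp]
    ring

theorem genocchiH_legendreStirling (n : ℕ) (hn : 1 ≤ n) :
    genocchiH n =
      ∑ j ∈ Finset.range (n + 1),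
        (-1) ^ (n + j) * legendreLS n j * (j.factorial : ℚ) ^ 2 := by
  have h := main_identity n hn 1
  rw [show genocchiH n = Ftilde n 1 from rfl, h]
  exact Finset.sum_congr rfl fun j _ => by rw [gaux_one]
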